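/- Along a left Bregman perpendicular a_λ defined by ∇f(a_λ) = ∇f(b⁺) + λ(∇f(a⁺) - ∇f(b⁺)) with ⟨∇f(a⁺) - ∇f(b⁺), a_λ - b⁺⟩ > 0 for λ > 0, the function λ ↦ D(b⁺, a_λ) is strictly increasing; specifically its derivative equals ⟨∇f(a⁺) - ∇f(b⁺), a_λ - b⁺⟩. -/

import Mathlib

open scoped RealInnerProductSpace

/-!
Write `g := ∇f(a⁺) - ∇f(b⁺)`. Differentiating `D(b, a(s)) = f b - f(a s) - ⟪∇f(a s), b - a s⟫`
along any curve, the two terms `⟪∇f(a s), a'(s)⟫` cancel, leaving `⟪(∇f ∘ a)'(s), a s - b⟫`.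
On the left perpendicular `∇f ∘ a` is affine with slope `g`, so the derivative is
`⟪g, a_λ - b⁺⟫`, which is positive for `λ > 0`; strict monotonicity follows by the mean value
theorem.
-/

section Bregman

variable {E : Type*} [NormedAddCommGroup E] [InnerProductSpace ℝ E]

def bregmanDiv (f : E → ℝ) (f' : E → E) (x y : E) : ℝ :=
  f x - f y - ⟪f' y, x - y⟫

theorem hasDerivAt_bregmanDiv_comp [CompleteSpace E] {f : E → ℝ} {f' : E → E} {a : ℝ → E}
    {a' v : E} (b : E) {l : ℝ} (hf : HasGradientAt f (f' (a l)) (a l))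
    (ha : HasDerivAt a a' l) (hf'a : HasDerivAt (fun s => f' (a s)) v l) :
    HasDerivAt (fun s => bregmanDiv f f' b (a s)) ⟪v, a l - b⟫ l := by
  have hfa : HasDerivAt (fun s => f (a s)) ⟪f' (a l), a'⟫ l := by
    have h := hf.hasFDerivAt.comp_hasDerivAt l ha
    rwa [InnerProductSpace.toDual_apply_apply] at h
  have hpair : HasDerivAt (fun s => ⟪f' (a s), b - a s⟫)
      (⟪f' (a l), -a'⟫ + ⟪v, b - a l⟫) l :=
    hf'a.inner ℝ (ha.const_sub b)
  refine (((hasDerivAt_const l (f b)).sub hfa).sub hpair).congr_deriv ?_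
  simp only [inner_neg_right, inner_sub_right]
  ring

end Bregman

theorem left_perpendicular_distance_strict_mono_general {d : ℕ}
    (f : EuclideanSpace ℝ (Fin d) → ℝ)
    (f' : EuclideanSpace ℝ (Fin d) → EuclideanSpace ℝ (Fin d))
    (G : Set (EuclideanSpace ℝ (Fin d)))
    (hgrad : ∀ w ∈ G, HasGradientAt f (f' w) w)
    (aplus bplus : EuclideanSpace ℝ (Fin d))
    (aline : ℝ → EuclideanSpace ℝ (Fin d))
    (aline' : ℝ → EuclideanSpace ℝ (Fin d))
    (halineG : ∀ l : ℝ, aline l ∈ G)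
    (halinederiv : ∀ l : ℝ, HasDerivAt aline (aline' l) l)
    (heq : ∀ l : ℝ, f' (aline l) = f' bplus + l • (f' aplus - f' bplus))
    (hpos : ∀ l : ℝ, 0 < l → 0 < ⟪f' aplus - f' bplus, aline l - bplus⟫)
    (D : EuclideanSpace ℝ (Fin d) → EuclideanSpace ℝ (Fin d) → ℝ)
    (hD : ∀ x y, D x y = f x - f y - ⟪f' y, x - y⟫) :
    (∀ l : ℝ, HasDerivAt (fun s => D bplus (aline s))
        ⟪f' aplus - f' bplus, aline l - bplus⟫ l) ∧
    StrictMonoOn (fun l => D bplus (aline l)) (Set.Ici (0 : ℝ)) := by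
  have hD' : D = bregmanDiv f f' := funext₂ hD
  have hderiv : ∀ l : ℝ, HasDerivAt (fun s => D bplus (aline s))
      ⟪f' aplus - f' bplus, aline l - bplus⟫ l := by
    intro l
    have hgrad_affine : HasDerivAt (fun s => f' (aline s)) (f' aplus - f' bplus) l := by
      simp only [heq]
      simpa using ((hasDerivAt_id l).smul_const (f' aplus - f' bplus)).const_add (f' bplus)
    rw [hD']
    exact hasDerivAt_bregmanDiv_comp bplus (hgrad _ (halineG l)) (halinederiv l) hgrad_affine
  refine ⟨hderiv, strictMonoOn_of_deriv_pos (convex_Ici 0)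
    (fun l _ => (hderiv l).continuousAt.continuousWithinAt) fun l hl => ?_⟩
  rw [(hderiv l).deriv]
  exact hpos l (by simpa using hl)

/-- Along a left Bregman perpendicular `a_λ` determined by
`∇f(a_λ) = ∇f(b⁺) + λ(∇f(a⁺) - ∇f(b⁺))`, the map `λ ↦ D(b⁺, a_λ)` has derivative
`⟨∇f(a⁺) - ∇f(b⁺), a_λ - b⁺⟩` and, this being positive for `λ > 0`, is strictly
increasing on `[0, ∞)`. -/
theorem left_perpendicular_distance_strict_mono {d : ℕ}
    (f : EuclideanSpace ℝ (Fin d) → ℝ)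
    (f' : EuclideanSpace ℝ (Fin d) → EuclideanSpace ℝ (Fin d))
    (G : Set (EuclideanSpace ℝ (Fin d))) (hG : IsOpen G)
    (hsmooth : ContDiffOn ℝ 2 f G)
    (hgrad : ∀ w ∈ G, HasGradientAt f (f' w) w)
    (aplus bplus : EuclideanSpace ℝ (Fin d)) (haplus : aplus ∈ G) (hbplus : bplus ∈ G)
    (aline : ℝ → EuclideanSpace ℝ (Fin d))
    (aline' : ℝ → EuclideanSpace ℝ (Fin d))
    (halineG : ∀ l : ℝ, aline l ∈ G)
    (halinederiv : ∀ l : ℝ, HasDerivAt aline (aline' l) l)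
    (heq : ∀ l : ℝ, f' (aline l) = f' bplus + l • (f' aplus - f' bplus))
    (hpos : ∀ l : ℝ, 0 < l → 0 < ⟪f' aplus - f' bplus, aline l - bplus⟫)
    (D : EuclideanSpace ℝ (Fin d) → EuclideanSpace ℝ (Fin d) → ℝ)
    (hD : ∀ x y, D x y = f x - f y - ⟪f' y, x - y⟫) :
    (∀ l : ℝ, HasDerivAt (fun s => D bplus (aline s))
        ⟪f' aplus - f' bplus, aline l - bplus⟫ l) ∧
    StrictMonoOn (fun l => D bplus (aline l)) (Set.Ici (0 : ℝ)) :=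
  left_perpendicular_distance_strict_mono_general f f' G hgrad aplus bplus aline aline' halineG
    halinederiv heq hpos D hD
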